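/- Every modality is an oracle modality: for any modality j, j coincides with the oracle modality of its predicate of dense propositions, i.e., for all s : Prop, j s ↔ ◯_{I_j} s, where I_j : (Σ s : Prop, j s) → Prop is the first projection. -/

import Mathlib

/-!
If `j s` holds then `s` is itself one of the oracle's queries, so `◯ s` holds. Conversely, `j s`
is a valid answer `r` to `◯ s`: it follows from `s`, and every query `d` with `j d` forces it,
because `(d → j s) → j d → j (j s) → j s`.
-/

def Oracle {A : Type*} (P : A → Prop) (s : Prop) : Prop :=
  ∀ r : Prop, (s → r) → (∀ a, (P a → r) → r) → r

theorem Oracle.self {A : Type*} (P : A → Prop) (a : A) : Oracle P (P a) :=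
  fun _ hr query => query a hr

theorem modality_bind (j : Prop → Prop) (mono : ∀ p q : Prop, (p → q) → (j p → j q))
    (idem : ∀ p : Prop, j (j p) → j p) {p q : Prop} (hp : j p) (f : p → j q) : j q :=
  idem q (mono p (j q) f hp)

theorem Oracle.modality_of_dense {A : Type*} {P : A → Prop} (j : Prop → Prop)
    (mono : ∀ p q : Prop, (p → q) → (j p → j q)) (infl : ∀ p : Prop, p → j p)
    (idem : ∀ p : Prop, j (j p) → j p) (dense : ∀ a, j (P a)) {s : Prop} (h : Oracle P s) :
    j s :=
  h (j s) (infl s) fun a => modality_bind j mono idem (dense a)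

theorem every_modality_is_oracle
    (j : Prop → Prop)
    (mono : ∀ p q : Prop, (p → q) → (j p → j q))
    (infl : ∀ p : Prop, p → j p)
    (idem : ∀ p : Prop, j (j p) → j p) :
    ∀ s : Prop, j s ↔ Oracle (fun d : { s : Prop // j s } => d.1) s :=
  fun s => ⟨fun hs => Oracle.self Subtype.val (⟨s, hs⟩ : { s : Prop // j s }),
    Oracle.modality_of_dense j mono infl idem Subtype.prop⟩
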